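/- arXiv:1106.2933 — 6 statements merged into one kernel-verified Lean document; each statement's English description precedes it below -/
import Mathlib

section
/- For any permutations π, ρ in S_n, the function Q_{πρ}(t_1,...,t_n) satisfies the multiplicative cocycle identity: Q_{πρ}(t_1,...,t_n) = Q_ρ(t_1,...,t_n) · Q_π(t_{ρ^{-1}(1)},...,t_{ρ^{-1}(n)}) whenever πρ has length |π|+|ρ| (lengths add). -/
/-- Number of inversions (= length) of a permutation of `Fin n`. -/
def inversions {n : ℕ} (π : Equiv.Perm (Fin n)) : ℕ :=
  (Finset.univ.filter (fun p : Fin n × Fin n => p.1 < p.2 ∧ π p.2 < π p.1)).card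

/-- `Q_π(t_1,…,t_n) = ∏_{i<j, π(i)>π(j)} Q(t_i,t_j)`. -/
def Qpi {T : Type*} (Q : T → T → ℂ) {n : ℕ} (π : Equiv.Perm (Fin n)) (t : Fin n → T) : ℂ :=
  ∏ p ∈ Finset.univ.filter (fun p : Fin n × Fin n => p.1 < p.2 ∧ π p.2 < π p.1),
    Q (t p.1) (t p.2)

/-!
Write `N(α, β)` (`relInvSet α β`) for the set of ordered pairs whose order under `α` is reversed
under `β`, so that the inversion set of `σ` is `N(1, σ)`. Reindexing pairs by `ρ` maps `N(ρ, πρ)`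
bijectively onto `N(1, π)`. Since `ρ` orders every pair one way or the other,
`N(1, πρ) ⊆ N(1, ρ) ∪ N(ρ, πρ)` and the union is disjoint. When lengths add, the cardinalities
agree and the inclusion is an equality, so the product defining `Q_{πρ}` splits into the products
over `N(1, ρ)` and `N(ρ, πρ)`, which are `Q_ρ(t)` and `Q_π(t ∘ ρ⁻¹)`.
-/

open Finset Equiv

section RelInvSet

variable {ι : Type*} [Fintype ι] [LinearOrder ι]

def relInvSet (α β : Perm ι) : Finset (ι × ι) :=
  univ.filter fun p => α p.1 < α p.2 ∧ β p.2 < β p.1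

theorem mem_relInvSet_mul_right {α β τ : Perm ι} {p : ι × ι} :
    p ∈ relInvSet (α * τ) (β * τ) ↔ prodCongr τ τ p ∈ relInvSet α β := by
  simp only [relInvSet, mem_filter, mem_univ, true_and]
  rfl

theorem card_relInvSet_mul_right (α β τ : Perm ι) :
    #(relInvSet (α * τ) (β * τ)) = #(relInvSet α β) :=
  card_equiv (prodCongr τ τ) fun _ => mem_relInvSet_mul_right

theorem prod_relInvSet_mul_right {M : Type*} [CommMonoid M] (α β τ : Perm ι) (f : ι × ι → M) :
    ∏ p ∈ relInvSet (α * τ) (β * τ), f p = ∏ p ∈ relInvSet α β, f (τ⁻¹ p.1, τ⁻¹ p.2) :=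
  prod_equiv (prodCongr τ τ) (fun _ => mem_relInvSet_mul_right) fun p _ => by simp

theorem disjoint_relInvSet (α β γ : Perm ι) : Disjoint (relInvSet α β) (relInvSet β γ) := by
  simp only [relInvSet, disjoint_filter]
  exact fun p _ hαβ hβγ => hαβ.2.asymm hβγ.1

theorem relInvSet_subset_union (α β γ : Perm ι) :
    relInvSet α γ ⊆ relInvSet α β ∪ relInvSet β γ := by
  intro p hp
  simp only [relInvSet, mem_union, mem_filter, mem_univ, true_and] at hp ⊢
  have hne : β p.1 ≠ β p.2 := fun h => hp.1.ne (by rw [β.injective h])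
  rcases hne.lt_or_gt with h | h
  · exact .inr ⟨h, hp.2⟩
  · exact .inl ⟨hp.1, h⟩

theorem relInvSet_eq_union_of_card_eq {α β γ : Perm ι}
    (h : #(relInvSet α γ) = #(relInvSet α β) + #(relInvSet β γ)) :
    relInvSet α γ = relInvSet α β ∪ relInvSet β γ :=
  eq_of_subset_of_card_le (relInvSet_subset_union α β γ) <| by
    rw [card_union_of_disjoint (disjoint_relInvSet α β γ), h]

end RelInvSet

theorem inversions_eq_card_relInvSet {n : ℕ} (σ : Perm (Fin n)) :
    inversions σ = #(relInvSet 1 σ) :=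
  rfl

theorem Qpi_eq_prod_relInvSet {T : Type*} (Q : T → T → ℂ) {n : ℕ} (σ : Perm (Fin n))
    (t : Fin n → T) : Qpi Q σ t = ∏ p ∈ relInvSet 1 σ, Q (t p.1) (t p.2) :=
  rfl

theorem Qpi_mul_of_length_add_general {T : Type*} (Q : T → T → ℂ)
    (n : ℕ) (π ρ : Equiv.Perm (Fin n))
    (hlen : inversions (π * ρ) = inversions π + inversions ρ)
    (t : Fin n → T) :
    Qpi Q (π * ρ) t = Qpi Q ρ t * Qpi Q π (t ∘ ⇑ρ⁻¹) := by
  have hπ := card_relInvSet_mul_right 1 π ρ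
  rw [one_mul] at hπ
  have hsplit : relInvSet 1 (π * ρ) = relInvSet 1 ρ ∪ relInvSet ρ (π * ρ) := by
    refine relInvSet_eq_union_of_card_eq ?_
    simp only [inversions_eq_card_relInvSet] at hlen
    omega
  have hshift := prod_relInvSet_mul_right 1 π ρ fun p => Q (t p.1) (t p.2)
  rw [one_mul] at hshift
  rw [Qpi_eq_prod_relInvSet, hsplit, prod_union (disjoint_relInvSet 1 ρ (π * ρ)), hshift]
  rfl

/-- multiplicative cocycle identity for `Q_{πρ}` when lengths add. -/
theorem Qpi_mul_of_length_add {T : Type*} (Q : T → T → ℂ)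
    (hherm : ∀ s t, (starRingEnd ℂ) (Q t s) = Q s t)
    (habs : ∀ s t, ‖Q s t‖ = 1)
    (n : ℕ) (π ρ : Equiv.Perm (Fin n))
    (hlen : inversions (π * ρ) = inversions π + inversions ρ)
    (t : Fin n → T) :
    Qpi Q (π * ρ) t = Qpi Q ρ t * Qpi Q π (t ∘ ⇑ρ⁻¹) :=
  Qpi_mul_of_length_add_general Q n π ρ hlen t
end

section
/- The operators Ψ_j, 1 ≤ j ≤ n-1, defined on functions of n variables by (Ψ_j f)(t_1,...,t_n) = Q(t_j, t_{j+1}) f(t_1,...,t_{j+1}, t_j,...,t_n), satisfy Ψ_j² = id, Ψ_i Ψ_j = Ψ_j Ψ_i for |i-j| ≥ 2, and the braid relation Ψ_j Ψ_{j+1} Ψ_j = Ψ_{j+1} Ψ_j Ψ_{j+1}. -/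
/-!
Each `Ψ_j` is an instance of the operator `f ↦ Q(t_a, t_b) · f(t ∘ (a b))` attached to a
transposition `(a b)`. Composing such operators composes the transpositions and multiplies the
`Q`-factors, so each relation reduces to the corresponding relation between transpositions in the
symmetric group plus an identity between the accumulated factors. For the commuting and braid
relations both sides collect the same factors (for the braid, `Q(t_a,t_b) Q(t_a,t_c) Q(t_b,t_c)`);
for `Ψ_j² = id` the factor is `Q(s,t) Q(t,s) = |Q(s,t)|² = 1` by hermiticity.
-/

/-- The operator `Ψ_j`: `(Ψ_j f)(t_1,…,t_n) = Q(t_j,t_{j+1}) f(…,t_{j+1},t_j,…)`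
(indices `0`-based: positions `j` and `j+1`). -/
def PsiJ {T : Type*} (Q : T → T → ℂ) {n : ℕ} (j : ℕ) (hj : j + 1 < n)
    (f : (Fin n → T) → ℂ) : (Fin n → T) → ℂ :=
  fun t => Q (t ⟨j, Nat.lt_of_succ_lt hj⟩) (t ⟨j + 1, hj⟩) *
    f (t ∘ Equiv.swap (⟨j, Nat.lt_of_succ_lt hj⟩ : Fin n) ⟨j + 1, hj⟩)

open Equiv

namespace Equiv

theorem swap_mul_swap_comm_of_ne {α : Type*} [DecidableEq α] {a b c d : α}
    (hac : a ≠ c) (had : a ≠ d) (hbc : b ≠ c) (hbd : b ≠ d) :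
    swap a b * swap c d = swap c d * swap a b := by
  rw [mul_swap_eq_swap_mul, swap_apply_of_ne_of_ne hac.symm hbc.symm,
    swap_apply_of_ne_of_ne had.symm hbd.symm]

theorem swap_mul_swap_mul_swap_braid {α : Type*} [DecidableEq α] {a b c : α}
    (hab : a ≠ b) (hac : a ≠ c) (hbc : b ≠ c) :
    swap a b * swap b c * swap a b = swap b c * swap a b * swap b c := by
  rw [swap_comm a b, swap_comm b c, swap_mul_swap_mul_swap hbc.symm hac.symm,
    swap_comm c b, swap_comm b a, swap_mul_swap_mul_swap hab hac, swap_comm]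

end Equiv

theorem Complex.mul_eq_one_of_conj_eq_of_norm_eq_one {z w : ℂ} (hconj : starRingEnd ℂ z = w)
    (hnorm : ‖z‖ = 1) : z * w = 1 := by
  rw [← hconj, Complex.mul_conj', hnorm]
  norm_num

section TwistedSwap

variable {ι T : Type*} [DecidableEq ι] (Q : T → T → ℂ)

def twistedSwap (a b : ι) (f : (ι → T) → ℂ) : (ι → T) → ℂ :=
  fun t => Q (t a) (t b) * f (t ∘ swap a b)

theorem PsiJ_eq_twistedSwap {n : ℕ} (j : ℕ) (hj : j + 1 < n) :
    PsiJ Q j hj = twistedSwap Q ⟨j, Nat.lt_of_succ_lt hj⟩ ⟨j + 1, hj⟩ :=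
  rfl

theorem twistedSwap_twistedSwap_apply (a b c d : ι) (f : (ι → T) → ℂ) (t : ι → T) :
    twistedSwap Q a b (twistedSwap Q c d f) t =
      Q (t a) (t b) * Q (t (swap a b c)) (t (swap a b d)) * f (t ∘ ⇑(swap a b * swap c d)) := by
  simp only [twistedSwap, Function.comp_apply, Perm.coe_mul, Function.comp_assoc, mul_assoc]

theorem twistedSwap_twistedSwap_self (hQ : ∀ s t, Q s t * Q t s = 1) (a b : ι)
    (f : (ι → T) → ℂ) : twistedSwap Q a b (twistedSwap Q a b f) = f := by
  funext t
  rw [twistedSwap_twistedSwap_apply, swap_apply_left, swap_apply_right, swap_mul_self,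
    hQ, one_mul, Perm.coe_one, Function.comp_id]

theorem twistedSwap_comm {a b c d : ι} (hac : a ≠ c) (had : a ≠ d) (hbc : b ≠ c)
    (hbd : b ≠ d) (f : (ι → T) → ℂ) :
    twistedSwap Q a b (twistedSwap Q c d f) = twistedSwap Q c d (twistedSwap Q a b f) := by
  funext t
  rw [twistedSwap_twistedSwap_apply, twistedSwap_twistedSwap_apply,
    swap_mul_swap_comm_of_ne hac had hbc hbd, swap_apply_of_ne_of_ne hac.symm hbc.symm,
    swap_apply_of_ne_of_ne had.symm hbd.symm, swap_apply_of_ne_of_ne hac had,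
    swap_apply_of_ne_of_ne hbc hbd, mul_comm (Q (t a) (t b))]

theorem twistedSwap_braid {a b c : ι} (hab : a ≠ b) (hac : a ≠ c) (hbc : b ≠ c)
    (f : (ι → T) → ℂ) :
    twistedSwap Q a b (twistedSwap Q b c (twistedSwap Q a b f)) =
      twistedSwap Q b c (twistedSwap Q a b (twistedSwap Q b c f)) := by
  funext t
  have hperm : t ∘ ⇑(swap a b) ∘ ⇑(swap b c) ∘ ⇑(swap a b) =
      t ∘ ⇑(swap b c) ∘ ⇑(swap a b) ∘ ⇑(swap b c) := by
    simp only [← Perm.coe_mul, ← mul_assoc, swap_mul_swap_mul_swap_braid hab hac hbc]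
  simp only [twistedSwap, Function.comp_apply, swap_apply_left, swap_apply_right,
    swap_apply_of_ne_of_ne hab hac, swap_apply_of_ne_of_ne hac.symm hbc.symm,
    Function.comp_assoc, hperm]
  ring

end TwistedSwap

/-- the operators `Ψ_j` satisfy `Ψ_j² = id`, commute at distance ≥ 2,
and satisfy the braid relation. -/
theorem PsiJ_relations {T : Type*} (n : ℕ) (Q : T → T → ℂ)
    (hherm : ∀ s t, (starRingEnd ℂ) (Q t s) = Q s t)
    (habs : ∀ s t, ‖Q s t‖ = 1) :
    (∀ (j : ℕ) (hj : j + 1 < n) (f : (Fin n → T) → ℂ),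
        PsiJ Q j hj (PsiJ Q j hj f) = f) ∧
    (∀ (i j : ℕ) (hi : i + 1 < n) (hj : j + 1 < n), (i + 2 ≤ j ∨ j + 2 ≤ i) →
        ∀ f : (Fin n → T) → ℂ,
          PsiJ Q i hi (PsiJ Q j hj f) = PsiJ Q j hj (PsiJ Q i hi f)) ∧
    (∀ (j : ℕ) (hj2 : j + 2 < n) (f : (Fin n → T) → ℂ),
        PsiJ Q j (Nat.lt_of_succ_lt hj2) (PsiJ Q (j + 1) hj2
            (PsiJ Q j (Nat.lt_of_succ_lt hj2) f))
          = PsiJ Q (j + 1) hj2 (PsiJ Q j (Nat.lt_of_succ_lt hj2)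
              (PsiJ Q (j + 1) hj2 f))) := by
  have hQ : ∀ s t, Q s t * Q t s = 1 := fun s t =>
    Complex.mul_eq_one_of_conj_eq_of_norm_eq_one (hherm t s) (habs s t)
  simp only [PsiJ_eq_twistedSwap]
  refine ⟨fun j hj f => twistedSwap_twistedSwap_self Q hQ _ _ f,
    fun i j hi hj hij f => twistedSwap_comm Q ?_ ?_ ?_ ?_ f,
    fun j hj2 f => twistedSwap_braid Q ?_ ?_ ?_ f⟩ <;>
  exact Fin.ne_of_val_ne (by dsimp only; omega)
end

section
/- The Q-symmetrization projection satisfies the inductive formula P_{n+1} = (1/(n+1)) (1 + Ψ_1 + Ψ_2Ψ_1 + ... + Ψ_n Ψ_{n-1} ··· Ψ_1)(1 ⊗ P_n). -/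
/-- The `Q`-symmetrization `P_n f = (1/n!) Σ_π Q_π(t) f(t∘π⁻¹)`. -/
noncomputable def Psym {T : Type*} (Q : T → T → ℂ) {n : ℕ} (f : (Fin n → T) → ℂ) :
    (Fin n → T) → ℂ :=
  fun t => ((n.factorial : ℂ))⁻¹ * ∑ π : Equiv.Perm (Fin n), Qpi Q π t * f (t ∘ ⇑π⁻¹)

/-- The operator `Ψ_{j+1}` (1-based), i.e. swapping `0`-based positions `j` and `j+1`
of a function of `n+1` variables, for `j : Fin n`. -/
def PsiF {T : Type*} (Q : T → T → ℂ) {n : ℕ} (j : Fin n)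
    (f : (Fin (n + 1) → T) → ℂ) : (Fin (n + 1) → T) → ℂ :=
  fun t => Q (t j.castSucc) (t j.succ) * f (t ∘ Equiv.swap j.castSucc j.succ)

/-- `1 ⊗ P_n`: identity in the first variable, `Q`-symmetrization in the last `n`. -/
noncomputable def oneTensorPsym {T : Type*} (Q : T → T → ℂ) {n : ℕ}
    (f : (Fin (n + 1) → T) → ℂ) : (Fin (n + 1) → T) → ℂ :=
  fun t => ((n.factorial : ℂ))⁻¹ * ∑ π : Equiv.Perm (Fin n),
    Qpi Q π (t ∘ Fin.succ) * f (Fin.cons (t 0) ((t ∘ Fin.succ) ∘ ⇑π⁻¹))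

/-- `chainPsi g k = Ψ_k Ψ_{k-1} ⋯ Ψ_1 g` (1-based; identity for `k = 0`). -/
noncomputable def chainPsi {T : Type*} (Q : T → T → ℂ) {n : ℕ}
    (g : (Fin (n + 1) → T) → ℂ) : ℕ → ((Fin (n + 1) → T) → ℂ)
  | 0 => g
  | (k + 1) => if h : k < n then PsiF Q ⟨k, h⟩ (chainPsi Q g k) else chainPsi Q g k

/-!
Every `π ∈ S_{n+1}` is uniquely of the form `Fin.insertPerm k σ`: it sends `k` to `0` and
`k.succAbove j` to `(σ j).succ`. The inversions of such a `π` are the pairs `(i, k)` with `i < k`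
and the images under `k.succAbove` of the inversions of `σ`, so
`Q_π(t) = ∏_{i<k} Q(t_i, t_k) · Q_σ(t without t_k)`. The same product appears in
`Ψ_k ⋯ Ψ_1 g (t) = ∏_{i<k} Q(t_i, t_k) · g(t_k, t without t_k)`: each `Ψ_j` moves the variable
in position `j` (counting from `0`) one step towards the front and contributes one factor.
Hence the `(n+1)!` terms of `P_{n+1} f (t)`, grouped by `k`, are the `(n+1) · n!` terms of the
right-hand side.
-/

open Finset Equiv

namespace Fin

variable {n : ℕ}

lemma swap_castSucc_succ_succAbove (i j : Fin n) :
    swap i.castSucc i.succ (i.castSucc.succAbove j) = i.succ.succAbove j := by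
  simp only [succAbove, swap_apply_def, Fin.ext_iff, lt_def, val_castSucc, val_succ]
  split_ifs <;> simp_all <;> omega

lemma removeNth_comp_swap_castSucc_succ {α : Type*} (i : Fin n) (t : Fin (n + 1) → α) :
    i.castSucc.removeNth (t ∘ swap i.castSucc i.succ) = i.succ.removeNth t := by
  ext j
  simp [removeNth, swap_castSucc_succ_succAbove]

def insertPerm (k : Fin (n + 1)) (σ : Perm (Fin n)) : Perm (Fin (n + 1)) :=
  Perm.decomposeFin.symm (0, σ) * k.cycleRange

@[simp]
lemma insertPerm_apply_self (k : Fin (n + 1)) (σ : Perm (Fin n)) : insertPerm k σ k = 0 := by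
  simp [insertPerm]

@[simp]
lemma insertPerm_apply_succAbove (k : Fin (n + 1)) (σ : Perm (Fin n)) (j : Fin n) :
    insertPerm k σ (k.succAbove j) = (σ j).succ := by
  simp [insertPerm]

@[simp]
lemma insertPerm_symm_apply_zero (k : Fin (n + 1)) (σ : Perm (Fin n)) :
    (insertPerm k σ).symm 0 = k :=
  (symm_apply_eq _).2 (insertPerm_apply_self k σ).symm

@[simp]
lemma insertPerm_symm_apply_succ (k : Fin (n + 1)) (σ : Perm (Fin n)) (j : Fin n) :
    (insertPerm k σ).symm j.succ = k.succAbove (σ.symm j) :=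
  (symm_apply_eq _).2 (by simp)

lemma insertPerm_injective :
    Function.Injective (fun p : Fin (n + 1) × Perm (Fin n) => insertPerm p.1 p.2) := by
  rintro ⟨k, σ⟩ ⟨l, τ⟩ h
  dsimp only at h
  obtain rfl : k = l := by simpa using congrArg (fun π : Perm _ => π.symm 0) h
  exact Prod.ext rfl (Perm.ext fun j => by simpa using congrArg (· (k.succAbove j)) h)

lemma insertPerm_bijective :
    Function.Bijective (fun p : Fin (n + 1) × Perm (Fin n) => insertPerm p.1 p.2) :=
  (Fintype.bijective_iff_injective_and_card _).2 ⟨insertPerm_injective, by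
    simp [Fintype.card_perm, Nat.factorial_succ]⟩

lemma comp_insertPerm_inv {α : Type*} (k : Fin (n + 1)) (σ : Perm (Fin n)) (t : Fin (n + 1) → α) :
    t ∘ ⇑(insertPerm k σ)⁻¹ = Fin.cons (t k) (k.removeNth t ∘ ⇑σ⁻¹) := by
  ext j
  cases j using Fin.cases <;> simp [removeNth]

end Fin

section Qsymmetrization

variable {T : Type*} (Q : T → T → ℂ) {n : ℕ}

lemma Qpi_eq_prod_Iio_mul_Qpi_removeNth {π : Perm (Fin (n + 1))} {σ : Perm (Fin n)}
    {k : Fin (n + 1)} (hk : π k = 0) (hσ : ∀ j, π (k.succAbove j) = (σ j).succ)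
    (t : Fin (n + 1) → T) :
    Qpi Q π t = (∏ i < k, Q (t i) (t k)) * Qpi Q σ (k.removeNth t) := by
  simp only [Qpi, prod_filter, Fintype.prod_prod_type, ← filter_gt_eq_Iio,
    Fin.prod_univ_succAbove _ k]
  simp only [hk, hσ, lt_irrefl, Fin.not_lt_zero, Fin.succ_pos, Fin.succAbove_lt_succAbove_iff,
    Fin.succ_lt_succ_iff, and_false, and_true, if_false, one_mul, prod_const_one, Fin.removeNth,
    ← prod_mul_distrib]

lemma chainPsi_succ (g : (Fin (n + 1) → T) → ℂ) (i : Fin n) :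
    chainPsi Q g i.succ = PsiF Q i (chainPsi Q g i.castSucc) := by
  simp [chainPsi]

lemma chainPsi_apply (g : (Fin (n + 1) → T) → ℂ) (k : Fin (n + 1)) (t : Fin (n + 1) → T) :
    chainPsi Q g k t = (∏ i < k, Q (t i) (t k)) * g (Fin.cons (t k) (k.removeNth t)) := by
  induction k using Fin.induction generalizing t with
  | zero => simp [chainPsi, Iio_eq_empty.2 (isMin_iff_eq_bot.2 bot_eq_zero.symm)]
  | succ i ih =>
    have h_swap_self : swap i.castSucc i.succ i.castSucc = i.succ := swap_apply_left _ _
    have h_swap_lt : ∀ j < i.castSucc, swap i.castSucc i.succ j = j := fun j hj =>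
      swap_apply_of_ne_of_ne hj.ne (hj.trans i.castSucc_lt_succ).ne
    have h_Iio : Iio i.succ = Iic i.castSucc := by ext; simp [Fin.le_castSucc_iff]
    rw [chainPsi_succ, PsiF, ih, Function.comp_apply, h_swap_self,
      Fin.removeNth_comp_swap_castSucc_succ, h_Iio, ← mul_prod_Iio_eq_prod_Iic, mul_assoc]
    congr 2
    exact prod_congr rfl fun j hj => by rw [Function.comp_apply, h_swap_lt j (mem_Iio.1 hj)]

lemma oneTensorPsym_cons (g : (Fin (n + 1) → T) → ℂ) (a : T) (x : Fin n → T) :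
    oneTensorPsym Q g (Fin.cons a x) =
      (n.factorial : ℂ)⁻¹ * ∑ σ : Perm (Fin n), Qpi Q σ x * g (Fin.cons a (x ∘ ⇑σ⁻¹)) := by
  simp [oneTensorPsym]

lemma Qpi_insertPerm (k : Fin (n + 1)) (σ : Perm (Fin n)) (t : Fin (n + 1) → T) :
    Qpi Q (Fin.insertPerm k σ) t = (∏ i < k, Q (t i) (t k)) * Qpi Q σ (k.removeNth t) :=
  Qpi_eq_prod_Iio_mul_Qpi_removeNth Q (Fin.insertPerm_apply_self k σ)
    (Fin.insertPerm_apply_succAbove k σ) t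

end Qsymmetrization

theorem Psym_succ_formula_general {T : Type*} (Q : T → T → ℂ)
    (n : ℕ) (f : (Fin (n + 1) → T) → ℂ) :
    Psym Q f = fun t => ((n + 1 : ℂ))⁻¹ *
      ∑ k ∈ Finset.range (n + 1), chainPsi Q (oneTensorPsym Q f) k t := by
  funext t
  have h_reindex := Fin.insertPerm_bijective.sum_comp
    (fun π : Perm (Fin (n + 1)) => Qpi Q π t * f (t ∘ ⇑π⁻¹))
  rw [Psym, ← h_reindex, Fintype.sum_prod_type, ← Fin.sum_univ_eq_sum_range]
  simp only [Qpi_insertPerm, Fin.comp_insertPerm_inv, chainPsi_apply, oneTensorPsym_cons,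
    Nat.factorial_succ, mul_sum]
  refine sum_congr rfl fun k _ => sum_congr rfl fun σ _ => ?_
  push_cast [mul_inv]
  ring

/-- the inductive formula
`P_{n+1} = (1/(n+1)) (1 + Ψ_1 + Ψ_2Ψ_1 + ⋯ + Ψ_n⋯Ψ_1)(1 ⊗ P_n)`. -/
theorem Psym_succ_formula {T : Type*} (Q : T → T → ℂ)
    (hherm : ∀ s t, (starRingEnd ℂ) (Q t s) = Q s t)
    (habs : ∀ s t, ‖Q s t‖ = 1)
    (n : ℕ) (f : (Fin (n + 1) → T) → ℂ) :
    Psym Q f = fun t => ((n + 1 : ℂ))⁻¹ *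
      ∑ k ∈ Finset.range (n + 1), chainPsi Q (oneTensorPsym Q f) k t :=
  Psym_succ_formula_general Q n f
end

section
/- The Q-symmetrization formula: for f ∈ L²(Tⁿ), (P_n f)(t_1,...,t_n) = (1/n!) Σ_{π ∈ S_n} Q_π(t_1,...,t_n) f(t_{π^{-1}(1)},...,t_{π^{-1}(n)}), where Q_π(t_1,...,t_n) = ∏_{1≤i<j≤n, π(i)>π(j)} Q(t_i,t_j). Equivalently, for each π ∈ S_n, (Ψ_π f)(t_1,...,t_n) = Q_{π^{-1}}(t_1,...,t_n) f(t_{π(1)},...,t_{π(n)}). -/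
lemma swap_lt_swap_iff_of_adjacent {n : ℕ} {a b : Fin n} (hab : (a : ℕ) + 1 = b) {i k : Fin n}
    (hik : (i, k) ≠ (a, b)) (hki : (i, k) ≠ (b, a)) :
    Equiv.swap a b i < Equiv.swap a b k ↔ i < k := by
  simp only [ne_eq, Prod.mk.injEq, Fin.ext_iff] at hik hki
  simp only [Equiv.swap_apply_def, Fin.lt_def]
  split_ifs <;> simp only [Fin.ext_iff] at * <;> omega

lemma Equiv.Perm.induction_on_adjacent_swap {n : ℕ} {motive : Equiv.Perm (Fin n) → Prop}
    (π : Equiv.Perm (Fin n)) (one : motive 1)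
    (swap_mul : ∀ (j : ℕ) (hj : j + 1 < n) (ρ : Equiv.Perm (Fin n)), motive ρ →
      motive (Equiv.swap ⟨j, Nat.lt_of_succ_lt hj⟩ ⟨j + 1, hj⟩ * ρ)) :
    motive π := by
  cases n with
  | zero => exact Subsingleton.elim 1 π ▸ one
  | succ m =>
    have hπ : π ∈ Submonoid.closure (Set.range fun i : Fin m ↦ Equiv.swap i.castSucc i.succ) := by
      rw [Equiv.Perm.mclosure_swap_castSucc_succ]; trivial
    induction hπ using Submonoid.closure_induction_left with
    | one => exact one
    | mul_left _ hx ρ _ ih =>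
      obtain ⟨i, rfl⟩ := hx
      exact swap_mul i (Nat.succ_lt_succ i.isLt) ρ ih

lemma Qpi_one {T : Type*} (Q : T → T → ℂ) {n : ℕ} (t : Fin n → T) : Qpi Q 1 t = 1 :=
  Finset.prod_eq_one fun _ hp => absurd (Finset.mem_filter.mp hp).2 fun h => h.1.not_gt h.2

lemma Qpi_mul_swap_of_adjacent {T : Type*} {Q : T → T → ℂ} (hQ : ∀ s t, Q s t * Q t s = 1)
    {n : ℕ} {a b : Fin n} (hab : (a : ℕ) + 1 = b) (ρ : Equiv.Perm (Fin n)) (t : Fin n → T) :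
    Qpi Q (ρ * Equiv.swap a b) t = Q (t a) (t b) * Qpi Q ρ (t ∘ Equiv.swap a b) := by
  set σ := Equiv.swap a b
  have hlt : a < b := by rw [Fin.lt_def]; omega
  have hne : ((a, b) : Fin n × Fin n) ≠ (b, a) := by simp [hlt.ne]
  let F : Fin n × Fin n → ℂ := fun p =>
    if p.1 < p.2 ∧ ρ (σ p.2) < ρ (σ p.1) then Q (t p.1) (t p.2) else 1
  let G : Fin n × Fin n → ℂ := fun p =>
    if σ p.1 < σ p.2 ∧ ρ (σ p.2) < ρ (σ p.1) then Q (t p.1) (t p.2) else 1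
  have hF : Qpi Q (ρ * σ) t = ∏ p, F p := Finset.prod_filter _ _
  have hG : Qpi Q ρ (t ∘ σ) = ∏ p, G p := by
    rw [Qpi, Finset.prod_filter]
    refine (Fintype.prod_congr _ _ fun p => ?_).trans ((Equiv.prodCongr σ σ).prod_comp G)
    simp [G, σ]
  have hcompl : ∏ p ∈ {(a, b), (b, a)}ᶜ, F p = ∏ p ∈ {(a, b), (b, a)}ᶜ, G p := by
    refine Finset.prod_congr rfl fun p hp => ?_
    simp only [Finset.mem_compl, Finset.mem_insert, Finset.mem_singleton, not_or] at hp
    simp only [F, G, σ, swap_lt_swap_iff_of_adjacent hab hp.1 hp.2]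
  have hFab : F (a, b) = if ρ a < ρ b then Q (t a) (t b) else 1 := by simp [F, σ, hlt]
  have hFba : F (b, a) = 1 := if_neg fun h => hlt.not_gt h.1
  have hGab : G (a, b) = 1 := if_neg fun h => by simp [σ] at h; exact hlt.not_gt h.1
  have hGba : G (b, a) = if ρ b < ρ a then Q (t b) (t a) else 1 := by simp [G, σ, hlt]
  rw [hF, hG, ← Finset.prod_mul_prod_compl {(a, b), (b, a)} F,
    ← Finset.prod_mul_prod_compl {(a, b), (b, a)} G, hcompl, Finset.prod_pair hne,
    Finset.prod_pair hne, hFab, hFba, hGab, hGba]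
  rcases lt_or_gt_of_ne (ρ.injective.ne hlt.ne) with h | h
  · simp [h, h.not_gt]
  · simp [h, h.not_gt, ← mul_assoc, hQ]

lemma mul_flip_eq_one_of_hermitian_unimodular {T : Type*} {Q : T → T → ℂ}
    (hherm : ∀ s t, (starRingEnd ℂ) (Q t s) = Q s t) (habs : ∀ s t, ‖Q s t‖ = 1) (s t : T) :
    Q s t * Q t s = 1 := by
  rw [← hherm t s, Complex.mul_conj, Complex.normSq_eq_norm_sq, habs, one_pow, Complex.ofReal_one]

lemma apply_eq_Qpi_mul_of_adjacent_swap {T : Type*} {Q : T → T → ℂ}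
    (hQ : ∀ s t, Q s t * Q t s = 1) {n : ℕ}
    {Ψ : Equiv.Perm (Fin n) → ((Fin n → T) → ℂ) → ((Fin n → T) → ℂ)}
    (hone : Ψ 1 = id) (hmul : ∀ π ρ, Ψ (π * ρ) = Ψ π ∘ Ψ ρ)
    (hswap : ∀ (j : ℕ) (hj : j + 1 < n),
        Ψ (Equiv.swap (⟨j, Nat.lt_of_succ_lt hj⟩ : Fin n) ⟨j + 1, hj⟩) = PsiJ Q j hj)
    (π : Equiv.Perm (Fin n)) (f : (Fin n → T) → ℂ) (t : Fin n → T) :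
    Ψ π f t = Qpi Q π⁻¹ t * f (t ∘ π) := by
  induction π using Equiv.Perm.induction_on_adjacent_swap generalizing f t with
  | one => simp [hone, Qpi_one]
  | swap_mul j hj ρ ih =>
    rw [hmul, Function.comp_apply, hswap, PsiJ, ih, mul_inv_rev, Equiv.swap_inv,
      Qpi_mul_swap_of_adjacent hQ rfl]
    simp only [Equiv.Perm.coe_mul, Function.comp_assoc, mul_assoc]

/-- Q-symmetrization formula: if `π ↦ Ψ_π` is the multiplicative
extension of `π_j ↦ Ψ_j` (well defined by the braid relations), then
`(Ψ_π f)(t) = Q_{π⁻¹}(t) f(t∘π)` and consequently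
`(P_n f)(t) = (1/n!) Σ_π Q_π(t) f(t∘π⁻¹)`. -/
theorem Qsymmetrization_formula {T : Type*} (Q : T → T → ℂ)
    (hherm : ∀ s t, (starRingEnd ℂ) (Q t s) = Q s t)
    (habs : ∀ s t, ‖Q s t‖ = 1)
    (n : ℕ)
    (Ψ : Equiv.Perm (Fin n) → ((Fin n → T) → ℂ) → ((Fin n → T) → ℂ))
    (hone : Ψ 1 = id)
    (hmul : ∀ π ρ : Equiv.Perm (Fin n), Ψ (π * ρ) = Ψ π ∘ Ψ ρ)
    (hswap : ∀ (j : ℕ) (hj : j + 1 < n),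
        Ψ (Equiv.swap (⟨j, Nat.lt_of_succ_lt hj⟩ : Fin n) ⟨j + 1, hj⟩) = PsiJ Q j hj) :
    (∀ (π : Equiv.Perm (Fin n)) (f : (Fin n → T) → ℂ) (t : Fin n → T),
        Ψ π f t = Qpi Q π⁻¹ t * f (t ∘ ⇑π)) ∧
    (∀ (f : (Fin n → T) → ℂ) (t : Fin n → T),
        ((n.factorial : ℂ))⁻¹ * ∑ π : Equiv.Perm (Fin n), Ψ π f t
          = ((n.factorial : ℂ))⁻¹ * ∑ π : Equiv.Perm (Fin n), Qpi Q π t * f (t ∘ ⇑π⁻¹)) := by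
  have hΨ := apply_eq_Qpi_mul_of_adjacent_swap
    (mul_flip_eq_one_of_hermitian_unimodular hherm habs) hone hmul hswap
  refine ⟨hΨ, fun f t => ?_⟩
  rw [← Equiv.sum_comp (Equiv.inv _)]
  simp [hΨ]
end

section
/- Let q ∈ ℂ with |q| = 1, and let Δ_1, Δ_2 be disjoint measurable subsets of an ordered measure space T with σ(Δ_1) = a > 0, σ(Δ_2) = b > 0, such that every point of Δ_1 is less than every point of Δ_2. Set Q(s,t) = q for s < t, Q(s,t) = q̄ for s > t, and g(t) = (b/a) q̄ χ_{Δ_1}(t) + χ_{Δ_2}(t). Then ∫∫ Q(s,t) g(s) conj(g(t)) dσ(s) dσ(t) = 2b²(Re(q) + 1). Consequently, the anyonic kernel Q is negative semidefinite if and only if q = -1. -/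
/-!
Expanding `g(s) conj (g(t))` over the four rectangles `Δᵢ ×ˢ Δⱼ` turns the quadratic form into
`Q`-weighted areas of these rectangles. On `Δ1 ×ˢ Δ2` and `Δ2 ×ˢ Δ1` the kernel is the constant
`q`, resp. `q̄`; on `Δᵢ ×ˢ Δᵢ` it averages to `Re q` under the swap `(s, t) ↦ (t, s)`, the diagonal
being null. With `|q| = 1` the weights of `g` make the form equal `2b²(Re q + 1)`, which is
positive unless `q = -1`; conversely, for `q = -1` the form of `f` is `-|∫ f|²`.
-/

open MeasureTheory ComplexConjugate

section

variable {T : Type*}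

lemma kernel_mul_stepFunction_eq (K : T → T → ℂ) (A B : Set T) (c d : ℂ) (p : T × T) :
    K p.1 p.2 * (c * A.indicator (fun _ => 1) p.1 + d * B.indicator (fun _ => 1) p.1) *
        conj (c * A.indicator (fun _ => 1) p.2 + d * B.indicator (fun _ => 1) p.2) =
      c * conj c * (A ×ˢ A).indicator (fun p => K p.1 p.2) p +
        c * conj d * (A ×ˢ B).indicator (fun p => K p.1 p.2) p +
        d * conj c * (B ×ˢ A).indicator (fun p => K p.1 p.2) p +
        d * conj d * (B ×ˢ B).indicator (fun p => K p.1 p.2) p := by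
  by_cases h1A : p.1 ∈ A <;> by_cases h1B : p.1 ∈ B <;> by_cases h2A : p.2 ∈ A <;>
    by_cases h2B : p.2 ∈ B <;> simp [h1A, h1B, h2A, h2B] <;> ring

variable [MeasurableSpace T] {σ : Measure T} {A B : Set T}

lemma integral_kernel_mul_stepFunction {K : T → T → ℂ} (hA : MeasurableSet A)
    (hB : MeasurableSet B)
    (hK : IntegrableOn (fun p : T × T => K p.1 p.2) ((A ∪ B) ×ˢ (A ∪ B)) (σ.prod σ))
    (c d : ℂ) {g : T → ℂ}
    (hg : g = fun t => c * A.indicator (fun _ => 1) t + d * B.indicator (fun _ => 1) t) :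
    Integrable (fun p : T × T => K p.1 p.2 * g p.1 * conj (g p.2)) (σ.prod σ) ∧
      ∫ p, K p.1 p.2 * g p.1 * conj (g p.2) ∂σ.prod σ =
        c * conj c * ∫ p in A ×ˢ A, K p.1 p.2 ∂σ.prod σ +
          c * conj d * ∫ p in A ×ˢ B, K p.1 p.2 ∂σ.prod σ +
          d * conj c * ∫ p in B ×ˢ A, K p.1 p.2 ∂σ.prod σ +
          d * conj d * ∫ p in B ×ˢ B, K p.1 p.2 ∂σ.prod σ := by
  subst hg
  have piece : ∀ {X Y : Set T}, MeasurableSet X → MeasurableSet Y → X ⊆ A ∪ B → Y ⊆ A ∪ B →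
      Integrable ((X ×ˢ Y).indicator fun p : T × T => K p.1 p.2) (σ.prod σ) :=
    fun hX hY hXAB hYAB =>
      (hK.mono_set (Set.prod_mono hXAB hYAB)).integrable_indicator (hX.prod hY)
  have hAA := (piece hA hA Set.subset_union_left Set.subset_union_left).const_mul (c * conj c)
  have hAB := (piece hA hB Set.subset_union_left Set.subset_union_right).const_mul (c * conj d)
  have hBA := (piece hB hA Set.subset_union_right Set.subset_union_left).const_mul (d * conj c)
  have hBB := (piece hB hB Set.subset_union_right Set.subset_union_right).const_mul (d * conj d)
  simp only [kernel_mul_stepFunction_eq]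
  refine ⟨((hAA.add hAB).add hBA).add hBB, ?_⟩
  rw [integral_add ?_ hBB, integral_add ?_ hBA, integral_add hAA hAB]
  · simp only [integral_const_mul, integral_indicator (hA.prod hA),
      integral_indicator (hA.prod hB), integral_indicator (hB.prod hA),
      integral_indicator (hB.prod hB)]
  · exact hAA.add hAB
  · exact (hAA.add hAB).add hBA

lemma integral_mul_conj_prod [SFinite σ] (f : T → ℂ) :
    ∫ p, f p.1 * conj (f p.2) ∂σ.prod σ = (‖∫ x, f x ∂σ‖ ^ 2 : ℝ) := by
  rw [integral_prod_mul f fun y => conj (f y), integral_conj, Complex.mul_conj']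
  push_cast
  rfl

end

section AnyonKernel

variable {T : Type*} [LinearOrder T]

def anyonKernel (q : ℂ) (s t : T) : ℂ := if s < t then q else conj q

lemma anyonKernel_of_lt (q : ℂ) {s t : T} (h : s < t) : anyonKernel q s t = q := if_pos h

lemma anyonKernel_of_gt (q : ℂ) {s t : T} (h : t < s) : anyonKernel q s t = conj q :=
  if_neg h.not_gt

lemma norm_anyonKernel (q : ℂ) (s t : T) : ‖anyonKernel q s t‖ = ‖q‖ := by
  unfold anyonKernel
  split_ifs <;> simp

lemma anyonKernel_add_anyonKernel_of_ne (q : ℂ) {s t : T} (h : s ≠ t) :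
    anyonKernel q s t + anyonKernel q t s = (2 * q.re : ℝ) := by
  rcases h.lt_or_gt with h | h
  · rw [anyonKernel_of_lt q h, anyonKernel_of_gt q h, Complex.add_conj]
  · rw [anyonKernel_of_gt q h, anyonKernel_of_lt q h, add_comm, Complex.add_conj]

lemma anyonKernel_neg_one (s t : T) : anyonKernel (-1) s t = -1 := by
  simp [anyonKernel]

variable [MeasurableSpace T]

lemma measurable_anyonKernel (q : ℂ) (hord : MeasurableSet {p : T × T | p.1 < p.2}) :
    Measurable fun p : T × T => anyonKernel q p.1 p.2 :=
  Measurable.ite hord measurable_const measurable_const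

lemma integrableOn_anyonKernel (q : ℂ) (hord : MeasurableSet {p : T × T | p.1 < p.2})
    {μ : Measure (T × T)} {R : Set (T × T)} (hR : μ R ≠ ⊤) :
    IntegrableOn (fun p : T × T => anyonKernel q p.1 p.2) R μ :=
  Measure.integrableOn_of_bounded hR (measurable_anyonKernel q hord).aestronglyMeasurable
    (ae_of_all _ fun p => (norm_anyonKernel q p.1 p.2).le)

variable {σ : Measure T} [SFinite σ] {A B : Set T}

lemma setIntegral_anyonKernel_prod_of_lt (q : ℂ) (hA : MeasurableSet A) (hB : MeasurableSet B)
    (hAB : ∀ s ∈ A, ∀ t ∈ B, s < t) :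
    ∫ p in A ×ˢ B, anyonKernel q p.1 p.2 ∂σ.prod σ = σ.real A * σ.real B * q := by
  rw [setIntegral_congr_fun (hA.prod hB) (g := fun _ => q)
      fun p hp => anyonKernel_of_lt q (hAB _ hp.1 _ hp.2),
    setIntegral_const, measureReal_prod_prod, Complex.real_smul]
  push_cast
  ring

lemma setIntegral_anyonKernel_prod_of_gt (q : ℂ) (hA : MeasurableSet A) (hB : MeasurableSet B)
    (hAB : ∀ s ∈ A, ∀ t ∈ B, s < t) :
    ∫ p in B ×ˢ A, anyonKernel q p.1 p.2 ∂σ.prod σ = σ.real A * σ.real B * conj q := by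
  rw [setIntegral_congr_fun (hB.prod hA) (g := fun _ => conj q)
      fun p hp => anyonKernel_of_gt q (hAB _ hp.2 _ hp.1),
    setIntegral_const, measureReal_prod_prod, Complex.real_smul]
  push_cast
  ring

/-- `A ×ˢ A` and `σ.prod σ` are swap-invariant, and `Q(s,t) + Q(t,s) = 2 Re q` off the
null diagonal. -/
lemma setIntegral_anyonKernel_prod_self (q : ℂ) (hord : MeasurableSet {p : T × T | p.1 < p.2})
    (hdiag : σ.prod σ {p : T × T | p.1 = p.2} = 0) (hA : σ A ≠ ⊤) :
    ∫ p in A ×ˢ A, anyonKernel q p.1 p.2 ∂σ.prod σ = q.re * σ.real A ^ 2 := by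
  set K : T × T → ℂ := fun p => anyonKernel q p.1 p.2
  have hK : IntegrableOn K (A ×ˢ A) (σ.prod σ) :=
    integrableOn_anyonKernel q hord (by simp [Measure.prod_prod, ENNReal.mul_ne_top, hA])
  have hrestrict : (σ.prod σ).restrict (A ×ˢ A) = (σ.restrict A).prod (σ.restrict A) :=
    (Measure.prod_restrict A A).symm
  have hswap : ∫ p in A ×ˢ A, K p.swap ∂σ.prod σ = ∫ p in A ×ˢ A, K p ∂σ.prod σ := by
    rw [hrestrict]
    exact integral_prod_swap K
  have hKswap : IntegrableOn (fun p => K p.swap) (A ×ˢ A) (σ.prod σ) := by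
    rw [IntegrableOn, hrestrict] at hK ⊢
    exact hK.swap
  have hoffdiag : ∀ᵐ p ∂(σ.prod σ).restrict (A ×ˢ A), K p + K p.swap = (2 * q.re : ℝ) := by
    refine ae_restrict_of_ae ?_
    filter_upwards [measure_eq_zero_iff_ae_notMem.mp hdiag] with p hp
    exact anyonKernel_add_anyonKernel_of_ne q hp
  have htwice := integral_congr_ae hoffdiag
  rw [integral_add hK hKswap, hswap, setIntegral_const, measureReal_prod_prod,
    Complex.real_smul] at htwice
  push_cast at htwice
  linear_combination htwice / 2

end AnyonKernel

lemma Complex.eq_neg_one_of_norm_eq_one_of_re_le_neg_one {q : ℂ} (hq : ‖q‖ = 1) (hre : q.re ≤ -1) :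
    q = -1 := by
  have hre' : q.re = -1 :=
    le_antisymm hre (by linarith [neg_abs_le q.re, Complex.abs_re_le_norm q])
  have him : q.im = 0 := by
    have h := Complex.sq_norm q
    rw [hq, Complex.normSq_apply, hre'] at h
    nlinarith
  exact Complex.ext (by simp [hre']) (by simp [him])

theorem anyon_negative_semidefinite_iff_general {T : Type*} [LinearOrder T] [MeasurableSpace T]
    (σ : Measure T) [SigmaFinite σ]
    (hord : MeasurableSet {p : T × T | p.1 < p.2})
    (hdiag : (σ.prod σ) {p : T × T | p.1 = p.2} = 0)
    (q : ℂ) (hq : ‖q‖ = 1)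
    (Δ1 Δ2 : Set T) (h1 : MeasurableSet Δ1) (h2 : MeasurableSet Δ2)
    (hlt : ∀ s ∈ Δ1, ∀ t ∈ Δ2, s < t)
    (a b : ℝ) (ha : 0 < a) (hb : 0 < b)
    (hσ1 : σ Δ1 = ENNReal.ofReal a) (hσ2 : σ Δ2 = ENNReal.ofReal b)
    (Q : T → T → ℂ) (hQ : ∀ s t, Q s t = if s < t then q else (starRingEnd ℂ) q)
    (g : T → ℂ)
    (hg : g = fun t => (b / a : ℂ) * (starRingEnd ℂ) q * Set.indicator Δ1 (fun _ => (1 : ℂ)) t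
      + Set.indicator Δ2 (fun _ => (1 : ℂ)) t) :
    (∫ p, Q p.1 p.2 * g p.1 * (starRingEnd ℂ) (g p.2) ∂(σ.prod σ))
        = ((2 * b ^ 2 * (q.re + 1) : ℝ) : ℂ) ∧
    ((∀ f : T → ℂ,
        Integrable (fun p => Q p.1 p.2 * f p.1 * (starRingEnd ℂ) (f p.2)) (σ.prod σ) →
        (∫ p, Q p.1 p.2 * f p.1 * (starRingEnd ℂ) (f p.2) ∂(σ.prod σ)).re ≤ 0)
      ↔ q = -1) := by
  obtain rfl : Q = anyonKernel q := funext₂ hQ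
  have hfin : σ (Δ1 ∪ Δ2) ≠ ⊤ :=
    (measure_union_le Δ1 Δ2).trans_lt (by simp [hσ1, hσ2]) |>.ne
  have hreal1 : σ.real Δ1 = a := by simp [measureReal_def, hσ1, ha.le]
  have hreal2 : σ.real Δ2 = b := by simp [measureReal_def, hσ2, hb.le]
  obtain ⟨hint, hexpand⟩ := integral_kernel_mul_stepFunction (σ := σ) h1 h2
    (integrableOn_anyonKernel q hord
      (by rw [Measure.prod_prod]; exact ENNReal.mul_ne_top hfin hfin))
    ((b / a : ℂ) * conj q) 1 (hg.trans (by simp only [one_mul]))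
  have hvalue : ∫ p, anyonKernel q p.1 p.2 * g p.1 * conj (g p.2) ∂σ.prod σ
      = ((2 * b ^ 2 * (q.re + 1) : ℝ) : ℂ) := by
    have hqq : q * conj q = 1 := by simp [Complex.mul_conj', hq]
    have ha' : (a : ℂ) ≠ 0 := by exact_mod_cast ha.ne'
    rw [hexpand, setIntegral_anyonKernel_prod_self q hord hdiag (by simp [hσ1]),
      setIntegral_anyonKernel_prod_self q hord hdiag (by simp [hσ2]),
      setIntegral_anyonKernel_prod_of_lt q h1 h2 hlt,
      setIntegral_anyonKernel_prod_of_gt q h1 h2 hlt, hreal1, hreal2]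
    simp only [map_mul, map_div₀, Complex.conj_ofReal, Complex.conj_conj, map_one]
    push_cast
    field_simp
    linear_combination (b ^ 2 * q.re + 2 * b ^ 2) * hqq
  refine ⟨hvalue, fun hnsd => ?_, ?_⟩
  · have hle := hnsd g hint
    rw [hvalue, Complex.ofReal_re] at hle
    exact Complex.eq_neg_one_of_norm_eq_one_of_re_le_neg_one hq (by nlinarith [pow_pos hb 2])
  · rintro rfl f -
    simp only [anyonKernel_neg_one, neg_mul, one_mul, integral_neg, integral_mul_conj_prod,
      Complex.neg_re, Complex.ofReal_re, Left.neg_nonpos_iff]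
    positivity

/-- for the anyonic kernel `Q` (with `|q| = 1`) and disjoint sets
`Δ_1 < Δ_2` of measures `a, b > 0`, the test function
`g = (b/a) q̄ χ_{Δ_1} + χ_{Δ_2}` gives
`∫∫ Q(s,t) g(s) conj(g(t)) dσ dσ = 2b²(Re q + 1)`; consequently `Q` is negative
semidefinite iff `q = -1`. -/
theorem anyon_negative_semidefinite_iff {T : Type*} [LinearOrder T] [MeasurableSpace T]
    (σ : Measure T) [SigmaFinite σ]
    (hord : MeasurableSet {p : T × T | p.1 < p.2})
    (hdiag : (σ.prod σ) {p : T × T | p.1 = p.2} = 0)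
    (q : ℂ) (hq : ‖q‖ = 1)
    (Δ1 Δ2 : Set T) (h1 : MeasurableSet Δ1) (h2 : MeasurableSet Δ2)
    (hdisj : Disjoint Δ1 Δ2)
    (hlt : ∀ s ∈ Δ1, ∀ t ∈ Δ2, s < t)
    (a b : ℝ) (ha : 0 < a) (hb : 0 < b)
    (hσ1 : σ Δ1 = ENNReal.ofReal a) (hσ2 : σ Δ2 = ENNReal.ofReal b)
    (Q : T → T → ℂ) (hQ : ∀ s t, Q s t = if s < t then q else (starRingEnd ℂ) q)
    (g : T → ℂ)
    (hg : g = fun t => (b / a : ℂ) * (starRingEnd ℂ) q * Set.indicator Δ1 (fun _ => (1 : ℂ)) t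
      + Set.indicator Δ2 (fun _ => (1 : ℂ)) t) :
    (∫ p, Q p.1 p.2 * g p.1 * (starRingEnd ℂ) (g p.2) ∂(σ.prod σ))
        = ((2 * b ^ 2 * (q.re + 1) : ℝ) : ℂ) ∧
    ((∀ f : T → ℂ,
        Integrable (fun p => Q p.1 p.2 * f p.1 * (starRingEnd ℂ) (f p.2)) (σ.prod σ) →
        (∫ p, Q p.1 p.2 * f p.1 * (starRingEnd ℂ) (f p.2) ∂(σ.prod σ)).re ≤ 0)
      ↔ q = -1) :=
  anyon_negative_semidefinite_iff_general σ hord hdiag q hq Δ1 Δ2 h1 h2 hlt a b ha hb hσ1 hσ2 Q hQ g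
    hg
end

section
/- Action of the annihilation operator on Q-symmetric products: for h, f_1,...,f_n ∈ L²(T), a⁻(h)(f_1 ⊛ ··· ⊛ f_n) = ∫ conj(h(s)) [Σ_{k=1}^n f_k(s) (Q(s,·)f_1) ⊛ ··· ⊛ (Q(s,·)f_{k-1}) ⊛ f_{k+1} ⊛ ··· ⊛ f_n] dσ(s). -/
open MeasureTheory

/-- The `Q`-symmetric tensor product `f_1 ⊛ ⋯ ⊛ f_n = P_n(f_1 ⊗ ⋯ ⊗ f_n)`. -/
noncomputable def symProd {T : Type*} (Q : T → T → ℂ) {n : ℕ} (f : Fin n → T → ℂ) :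
    (Fin n → T) → ℂ :=
  Psym Q (fun t => ∏ i, f i (t i))

/-- The annihilation operator on the `(n+1)`-particle space. -/
noncomputable def annihilation {T : Type*} [MeasurableSpace T] (σ : Measure T) {n : ℕ}
    (g : T → ℂ) (F : (Fin (n + 1) → T) → ℂ) : (Fin n → T) → ℂ :=
  fun t => ((n : ℂ) + 1) * ∫ s, (starRingEnd ℂ) (g s) * F (Fin.cons s t) ∂σ

/-!
Split a permutation `π` of `Fin (n + 1)` as `π 0 = k` followed by a permutation `ρ` of the
remaining `n` slots, listed in increasing order (`consPerm k ρ`). Evaluated at `Fin.cons s t`,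
the factor `Q_π` splits into `Q_ρ(t)` times the inversions `(0, j)`, which are the `j` with
`ρ j < k` and contribute `Q(s, t_j)`; these are attached to the functions `f_i` with `i < k`.
So `(n + 1) · (f_1 ⊛ ⋯ ⊛ f_{n+1})(s, t)` is the sum over `k` of `f_k(s)` times an `n`-fold
`Q`-symmetric product at `t`, using `(n + 1) / (n + 1)! = 1 / n!`, and the annihilation formula
follows by integrating against `conj h`.
-/

def consPerm {n : ℕ} (k : Fin (n + 1)) (ρ : Equiv.Perm (Fin n)) : Equiv.Perm (Fin (n + 1)) :=
  (Equiv.Perm.decomposeFin.symm (0, ρ)).trans k.cycleRange.symm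

section consPerm

variable {n : ℕ} (k : Fin (n + 1)) (ρ : Equiv.Perm (Fin n))

@[simp] lemma consPerm_zero : consPerm k ρ 0 = k := by
  simp [consPerm]

@[simp] lemma consPerm_succ (a : Fin n) : consPerm k ρ a.succ = k.succAbove (ρ a) := by
  simp [consPerm, Equiv.Perm.decomposeFin_symm_apply_succ, Equiv.swap_self]

lemma consPerm_inv_self : (consPerm k ρ)⁻¹ k = 0 :=
  (Equiv.symm_apply_eq _).mpr (consPerm_zero k ρ).symm

lemma consPerm_inv_succAbove (j : Fin n) : (consPerm k ρ)⁻¹ (k.succAbove j) = (ρ⁻¹ j).succ :=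
  (Equiv.symm_apply_eq _).mpr (by simp)

omit k ρ in
lemma consPerm_bijective :
    Function.Bijective (fun p : Fin (n + 1) × Equiv.Perm (Fin n) => consPerm p.1 p.2) := by
  rw [Fintype.bijective_iff_injective_and_card]
  refine ⟨?_, by simp [Fintype.card_perm, Nat.factorial_succ]⟩
  rintro ⟨k, ρ⟩ ⟨k', ρ'⟩ heq
  obtain rfl : k = k' := by simpa using congr($heq 0)
  obtain rfl : ρ = ρ' := Equiv.ext fun a => by simpa using congr($heq a.succ)
  rfl

end consPerm

lemma Qpi_eq_prod_prod {T : Type*} (Q : T → T → ℂ) {n : ℕ} (π : Equiv.Perm (Fin n))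
    (t : Fin n → T) :
    Qpi Q π t = ∏ i, ∏ j, if i < j ∧ π j < π i then Q (t i) (t j) else 1 := by
  rw [Qpi, Finset.prod_filter, Fintype.prod_prod_type]

lemma Qpi_consPerm_cons {T : Type*} (Q : T → T → ℂ) {n : ℕ} (k : Fin (n + 1))
    (ρ : Equiv.Perm (Fin n)) (s : T) (t : Fin n → T) :
    Qpi Q (consPerm k ρ) (Fin.cons s t) =
      Qpi Q ρ t * ∏ j, if (ρ j).castSucc < k then Q s (t j) else 1 := by
  simp only [Qpi_eq_prod_prod, Fin.prod_univ_succ, consPerm_zero, consPerm_succ, Fin.cons_zero,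
    Fin.cons_succ, Fin.succ_pos, Fin.not_lt_zero, false_and, if_false, true_and,
    Fin.succ_lt_succ_iff, Fin.succAbove_lt_succAbove_iff, Fin.succAbove_lt_iff_castSucc_lt,
    one_mul]
  rw [mul_comm]

lemma prod_cons_consPerm_inv {T M : Type*} [CommMonoid M] {n : ℕ} (f : Fin (n + 1) → T → M)
    (k : Fin (n + 1)) (ρ : Equiv.Perm (Fin n)) (s : T) (t : Fin n → T) :
    ∏ i, f i ((Fin.cons s t : Fin (n + 1) → T) ((consPerm k ρ)⁻¹ i)) =
      f k s * ∏ j, f (k.succAbove j) (t (ρ⁻¹ j)) := by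
  simp only [Fin.prod_univ_succAbove _ k, consPerm_inv_self, consPerm_inv_succAbove, Fin.cons_zero,
    Fin.cons_succ]

lemma Qpi_mul_prod_consPerm {T : Type*} (Q : T → T → ℂ) {n : ℕ} (f : Fin (n + 1) → T → ℂ)
    (k : Fin (n + 1)) (ρ : Equiv.Perm (Fin n)) (s : T) (t : Fin n → T) :
    Qpi Q (consPerm k ρ) (Fin.cons s t) *
        ∏ i, f i ((Fin.cons s t : Fin (n + 1) → T) ((consPerm k ρ)⁻¹ i)) =
      f k s * (Qpi Q ρ t * ∏ j,
        if k.succAbove j < k then Q s (t (ρ⁻¹ j)) * f (k.succAbove j) (t (ρ⁻¹ j))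
        else f (k.succAbove j) (t (ρ⁻¹ j))) := by
  have hreindex : ∏ j, (if (ρ j).castSucc < k then Q s (t j) else 1) =
      ∏ j, (if j.castSucc < k then Q s (t (ρ⁻¹ j)) else 1) :=
    Fintype.prod_equiv ρ _ _ fun j => by simp
  have hsplit : ∀ j, (if k.succAbove j < k then Q s (t (ρ⁻¹ j)) * f (k.succAbove j) (t (ρ⁻¹ j))
      else f (k.succAbove j) (t (ρ⁻¹ j))) =
      (if j.castSucc < k then Q s (t (ρ⁻¹ j)) else 1) * f (k.succAbove j) (t (ρ⁻¹ j)) := by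
    intro j
    simp only [Fin.succAbove_lt_iff_castSucc_lt]
    split_ifs <;> ring
  rw [Qpi_consPerm_cons, prod_cons_consPerm_inv, hreindex, Fintype.prod_congr _ _ hsplit,
    Finset.prod_mul_distrib]
  ring

lemma natCast_add_one_mul_inv_factorial_succ {K : Type*} [Field K] [CharZero K] (n : ℕ) :
    ((n : K) + 1) * ((n + 1).factorial : K)⁻¹ = (n.factorial : K)⁻¹ := by
  rw [Nat.factorial_succ, Nat.cast_mul, mul_inv, ← mul_assoc, Nat.cast_add_one,
    mul_inv_cancel₀ (Nat.cast_add_one_ne_zero n), one_mul]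

lemma natCast_add_one_mul_symProd_cons {T : Type*} (Q : T → T → ℂ) {n : ℕ}
    (f : Fin (n + 1) → T → ℂ) (s : T) (t : Fin n → T) :
    ((n : ℂ) + 1) * symProd Q f (Fin.cons s t) =
      ∑ k : Fin (n + 1), f k s *
        symProd Q (fun (i : Fin n) (x : T) =>
          if k.succAbove i < k then Q s x * f (k.succAbove i) x
          else f (k.succAbove i) x) t := by
  simp only [symProd, Psym, Function.comp_apply]
  rw [← Fintype.sum_bijective _ consPerm_bijective _ _ fun _ => rfl, Fintype.sum_prod_type,
    ← mul_assoc, natCast_add_one_mul_inv_factorial_succ, Finset.mul_sum]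
  refine Fintype.sum_congr _ _ fun k => ?_
  simp only [Qpi_mul_prod_consPerm, ← Finset.mul_sum]
  ring

theorem annihilation_symProd_general {T : Type*} [MeasurableSpace T] (σ : Measure T)
    (Q : T → T → ℂ)
    (n : ℕ) (f : Fin (n + 1) → T → ℂ) (h : T → ℂ) :
    annihilation σ h (symProd Q f) = fun t : Fin n → T =>
      ∫ s, (starRingEnd ℂ) (h s) *
        ∑ k : Fin (n + 1), f k s *
          symProd Q (fun (i : Fin n) (x : T) =>
            if k.succAbove i < k then Q s x * f (k.succAbove i) x
            else f (k.succAbove i) x) t ∂σ := by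
  funext t
  rw [annihilation, ← integral_const_mul]
  congr 1
  funext s
  rw [mul_left_comm, natCast_add_one_mul_symProd_cons]

/-- the action of the annihilation operator on `Q`-symmetric products:
`a⁻(h)(f_1 ⊛ ⋯ ⊛ f_{n+1}) = ∫ conj(h(s)) Σ_k f_k(s) (Q(s,·)f_1) ⊛ ⋯ ⊛ (Q(s,·)f_{k-1})
⊛ f_{k+1} ⊛ ⋯ ⊛ f_{n+1} dσ(s)`. -/
theorem annihilation_symProd {T : Type*} [MeasurableSpace T] (σ : Measure T)
    (Q : T → T → ℂ)
    (hherm : ∀ s t, (starRingEnd ℂ) (Q t s) = Q s t)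
    (habs : ∀ s t, ‖Q s t‖ = 1)
    (n : ℕ) (f : Fin (n + 1) → T → ℂ) (h : T → ℂ) :
    annihilation σ h (symProd Q f) = fun t : Fin n → T =>
      ∫ s, (starRingEnd ℂ) (h s) *
        ∑ k : Fin (n + 1), f k s *
          symProd Q (fun (i : Fin n) (x : T) =>
            if k.succAbove i < k then Q s x * f (k.succAbove i) x
            else f (k.succAbove i) x) t ∂σ :=
  annihilation_symProd_general σ Q n f h
end
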